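/- (Decoupling of distant centers) Let N ≥ 1, α > N, a > 0, and for β > 0 define Γ_β(i) = a|i|^{−α}e^{−β|i|} for i ≠ 0, Γ_β(0) = a (ℓ¹-norm on ℤ^N). Fix c_{1,1},…,c_{1,r} ∈ ℤ^N and c_2 ∈ ℤ^N, and for m ∈ ℤ^N set I₁(m) = {i ∈ ℤ^N : min_{k} |i − c_{1,k}| < |i + m − c_2|} and I₂(m) = ℤ^N ∖ I₁(m). Then for all 0 < β̃ < β: (i) for every ε > 0 there exists M such that for all m with |m| ≥ M and all i ∈ I₁(m), Γ_β(i + m − c_2) ≤ ε·max_{k} Γ_{β̃}(i − c_{1,k}); and (ii) for every ε > 0 there exists M such that for all m with |m| ≥ M and all i ∈ I₂(m), max_{k} Γ_β(i − c_{1,k}) ≤ ε·Γ_{β̃}(i + m − c_2). -/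

import Mathlib

/-!
Since `Γ_β(n) = e^{-(β-β̃)n} Γ_{β̃}(n)` and `Γ_{β̃}` is radially decreasing, whenever
`|p| ≤ |q|` we get `Γ_β(q) ≤ e^{-(β-β̃)|q|} Γ_{β̃}(p)`. In both parts `q` is the farther
of the two points `i + m - c₂` and `i - c₁ₖ`; as their difference differs from `m` by the
fixed vector `c₂ - c₁ₖ`, the triangle inequality gives `2|q| ≥ |m| - |c₂ - c₁ₖ|`, so the factor
`e^{-(β-β̃)|q|}` is below `ε` once `|m|` is large.
-/

open scoped BigOperators

noncomputable section

/-- The ℓ¹-norm of a lattice point `i ∈ ℤ^N`, as a natural number. -/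
def l1Z {N : ℕ} (i : Fin N → ℤ) : ℕ := ∑ s, (i s).natAbs

/-- The decay function `Γ_β(i) = a |i|^{-α} e^{-β|i|}` for `i ≠ 0`, `Γ_β(0) = a`. -/
noncomputable def GammaBeta (N : ℕ) (a α β : ℝ) (i : Fin N → ℤ) : ℝ :=
  if i = 0 then a else a * ((l1Z i : ℝ)) ^ (-α) * Real.exp (-β * (l1Z i : ℝ))

open Real Filter

section l1Z

variable {N : ℕ}

lemma l1Z_eq_zero_iff (i : Fin N → ℤ) : l1Z i = 0 ↔ i = 0 := by
  simp [l1Z, Finset.sum_eq_zero_iff, funext_iff]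

lemma l1Z_add_le (x y : Fin N → ℤ) : l1Z (x + y) ≤ l1Z x + l1Z y := by
  unfold l1Z
  rw [← Finset.sum_add_distrib]
  exact Finset.sum_le_sum fun s _ => Int.natAbs_add_le _ _

lemma l1Z_sub_le (x y : Fin N → ℤ) : l1Z (x - y) ≤ l1Z x + l1Z y := by
  unfold l1Z
  rw [← Finset.sum_add_distrib]
  exact Finset.sum_le_sum fun s _ => Int.natAbs_sub_le _ _

lemma l1Z_le_add_add (m i c c' : Fin N → ℤ) :
    l1Z m ≤ l1Z (i + m - c') + l1Z (i - c) + l1Z (c' - c) := by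
  have hm : m = (i + m - c') - (i - c) + (c' - c) := by abel
  calc l1Z m ≤ l1Z ((i + m - c') - (i - c)) + l1Z (c' - c) := by
        conv_lhs => rw [hm]
        exact l1Z_add_le _ _
    _ ≤ _ := by gcongr; exact l1Z_sub_le _ _

end l1Z

def gammaProfile (a α β : ℝ) (n : ℕ) : ℝ :=
  if n = 0 then a else a * (n : ℝ) ^ (-α) * exp (-β * n)

section gammaProfile

variable {a α β : ℝ}

lemma GammaBeta_eq_gammaProfile {N : ℕ} (i : Fin N → ℤ) :
    GammaBeta N a α β i = gammaProfile a α β (l1Z i) := by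
  simp only [GammaBeta, gammaProfile, l1Z_eq_zero_iff]

lemma gammaProfile_nonneg (ha : 0 ≤ a) (n : ℕ) : 0 ≤ gammaProfile a α β n := by
  unfold gammaProfile
  split_ifs
  · exact ha
  · positivity

lemma gammaProfile_eq_exp_mul (β' : ℝ) (n : ℕ) :
    gammaProfile a α β n = exp (-(β - β') * n) * gammaProfile a α β' n := by
  unfold gammaProfile
  split_ifs with hn
  · simp [hn]
  · rw [mul_left_comm, mul_assoc, ← exp_add]
    ring_nf

lemma gammaProfile_antitone (ha : 0 ≤ a) (hα : 0 ≤ α) (hβ : 0 ≤ β) :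
    Antitone (gammaProfile a α β) := by
  intro n n' hnn'
  rcases Nat.eq_zero_or_pos n' with rfl | hn'
  · rw [Nat.le_zero.mp hnn']
  have hn'1 : (1 : ℝ) ≤ n' := by exact_mod_cast hn'
  simp only [gammaProfile, if_neg hn'.ne']
  split_ifs with hn
  · have hpow : (n' : ℝ) ^ (-α) ≤ 1 := rpow_le_one_of_one_le_of_nonpos hn'1 (by linarith)
    have hexp : exp (-β * n') ≤ 1 := exp_le_one_iff.mpr (by nlinarith)
    calc a * (n' : ℝ) ^ (-α) * exp (-β * n') ≤ a * 1 * 1 := by gcongr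
      _ = a := by ring
  · have hn1 : (1 : ℝ) ≤ n := by exact_mod_cast Nat.one_le_iff_ne_zero.mpr hn
    have hle : (n : ℝ) ≤ n' := by exact_mod_cast hnn'
    have hpow : (n' : ℝ) ^ (-α) ≤ (n : ℝ) ^ (-α) :=
      rpow_le_rpow_of_nonpos (by linarith) hle (by linarith)
    have hexp : exp (-β * n') ≤ exp (-β * n) :=
      exp_le_exp.mpr (mul_le_mul_of_nonpos_left hle (by linarith))
    gcongr

end gammaProfile

section decoupling

variable {N : ℕ} {a α β β' : ℝ}

lemma GammaBeta_le_exp_mul (ha : 0 ≤ a) (hα : 0 ≤ α) (hβ' : 0 ≤ β')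
    {p q : Fin N → ℤ} (hpq : l1Z p ≤ l1Z q) :
    GammaBeta N a α β q ≤ exp (-(β - β') * l1Z q) * GammaBeta N a α β' p := by
  simp only [GammaBeta_eq_gammaProfile]
  rw [gammaProfile_eq_exp_mul β']
  gcongr
  exact gammaProfile_antitone ha hα hβ' hpq

lemma exists_forall_exp_le {c ε : ℝ} (hc : 0 < c) (hε : 0 < ε) :
    ∃ T : ℕ, ∀ n : ℕ, T ≤ n → exp (-c * n) ≤ ε := by
  have h : Tendsto (fun n : ℕ => exp (-(c * n))) atTop (nhds 0) :=
    tendsto_exp_neg_atTop_nhds_zero.comp (tendsto_natCast_atTop_atTop.const_mul_atTop hc)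
  simpa only [neg_mul] using eventually_atTop.mp (h.eventually (ge_mem_nhds hε))

lemma exists_GammaBeta_le_mul (ha : 0 ≤ a) (hα : 0 ≤ α) (hβ' : 0 < β') (hββ' : β' < β)
    {ε : ℝ} (hε : 0 < ε) (C : ℕ) :
    ∃ M : ℕ, ∀ p q : Fin N → ℤ, l1Z p ≤ l1Z q → M ≤ l1Z q + l1Z p + C →
      GammaBeta N a α β q ≤ ε * GammaBeta N a α β' p := by
  obtain ⟨T, hT⟩ := exists_forall_exp_le (sub_pos.mpr hββ') hε
  refine ⟨C + 2 * T, fun p q hpq hM => ?_⟩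
  calc GammaBeta N a α β q ≤ exp (-(β - β') * l1Z q) * GammaBeta N a α β' p :=
        GammaBeta_le_exp_mul ha hα hβ'.le hpq
    _ ≤ ε * GammaBeta N a α β' p := by
        gcongr
        · rw [GammaBeta_eq_gammaProfile]; exact gammaProfile_nonneg ha _
        · exact hT _ (by omega)

end decoupling

theorem statement15_general {N : ℕ} (a α : ℝ) (hα : (N : ℝ) < α) (ha : 0 < a)
    (r : ℕ) [NeZero r] (c1 : Fin r → (Fin N → ℤ)) (c2 : Fin N → ℤ)
    (β βt : ℝ) (hβt : 0 < βt) (hββ : βt < β) :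
    (∀ ε : ℝ, 0 < ε → ∃ M : ℕ, ∀ m : Fin N → ℤ, M ≤ l1Z m →
      ∀ i : Fin N → ℤ,
        (Finset.univ.inf' ⟨⟨0, Nat.pos_of_ne_zero (NeZero.ne r)⟩, Finset.mem_univ _⟩
            (fun k : Fin r => l1Z (i - c1 k)) < l1Z (i + m - c2)) →
        GammaBeta N a α β (i + m - c2) ≤
          ε * Finset.univ.sup' ⟨⟨0, Nat.pos_of_ne_zero (NeZero.ne r)⟩, Finset.mem_univ _⟩
            (fun k : Fin r => GammaBeta N a α βt (i - c1 k))) ∧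
    (∀ ε : ℝ, 0 < ε → ∃ M : ℕ, ∀ m : Fin N → ℤ, M ≤ l1Z m →
      ∀ i : Fin N → ℤ,
        ¬ (Finset.univ.inf' ⟨⟨0, Nat.pos_of_ne_zero (NeZero.ne r)⟩, Finset.mem_univ _⟩
            (fun k : Fin r => l1Z (i - c1 k)) < l1Z (i + m - c2)) →
        Finset.univ.sup' ⟨⟨0, Nat.pos_of_ne_zero (NeZero.ne r)⟩, Finset.mem_univ _⟩
            (fun k : Fin r => GammaBeta N a α β (i - c1 k)) ≤
          ε * GammaBeta N a α βt (i + m - c2)) := by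
  have hα0 : 0 ≤ α := (Nat.cast_nonneg N).trans hα.le
  set C := Finset.univ.sup fun k : Fin r => l1Z (c2 - c1 k)
  have hm : ∀ m i k, l1Z m ≤ l1Z (i + m - c2) + l1Z (i - c1 k) + C := fun m i k =>
    (l1Z_le_add_add m i (c1 k) c2).trans <| by
      gcongr; exact Finset.le_sup (f := fun k => l1Z (c2 - c1 k)) (Finset.mem_univ k)
  constructor
  · intro ε hε
    obtain ⟨M, hM⟩ := exists_GammaBeta_le_mul (N := N) ha.le hα0 hβt hββ hε C
    refine ⟨M, fun m hMm i hi => ?_⟩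
    obtain ⟨k, -, hk⟩ := Finset.exists_mem_eq_inf' Finset.univ_nonempty fun k => l1Z (i - c1 k)
    rw [hk] at hi
    calc GammaBeta N a α β (i + m - c2) ≤ ε * GammaBeta N a α βt (i - c1 k) :=
          hM _ _ hi.le (hMm.trans (by linarith [hm m i k]))
      _ ≤ _ := by
          gcongr
          exact Finset.le_sup' (fun k => GammaBeta N a α βt (i - c1 k)) (Finset.mem_univ k)
  · intro ε hε
    obtain ⟨M, hM⟩ := exists_GammaBeta_le_mul (N := N) ha.le hα0 hβt hββ hε C
    refine ⟨M, fun m hMm i hi => Finset.sup'_le _ _ fun k _ => ?_⟩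
    have hk : l1Z (i + m - c2) ≤ l1Z (i - c1 k) :=
      (not_lt.mp hi).trans (Finset.inf'_le _ (Finset.mem_univ k))
    exact hM _ _ hk (hMm.trans (by linarith [hm m i k]))

/-- Decoupling of distant centers: with
`I₁(m) = {i : min_k |i−c_{1,k}| < |i+m−c_2|}` and `I₂(m)` its complement, for any
`0 < β̃ < β`, (i) on `I₁(m)` the weight `Γ_β(i+m−c_2)` is eventually (as `|m| → ∞`)
dominated by `ε·max_k Γ_{β̃}(i−c_{1,k})`, and (ii) on `I₂(m)` the weight
`max_k Γ_β(i−c_{1,k})` is eventually dominated by `ε·Γ_{β̃}(i+m−c_2)`. -/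
theorem statement15 {N : ℕ} (hN : 1 ≤ N) (a α : ℝ) (hα : (N : ℝ) < α) (ha : 0 < a)
    (r : ℕ) [NeZero r] (c1 : Fin r → (Fin N → ℤ)) (c2 : Fin N → ℤ)
    (β βt : ℝ) (hβt : 0 < βt) (hββ : βt < β) :
    (∀ ε : ℝ, 0 < ε → ∃ M : ℕ, ∀ m : Fin N → ℤ, M ≤ l1Z m →
      ∀ i : Fin N → ℤ,
        (Finset.univ.inf' ⟨⟨0, Nat.pos_of_ne_zero (NeZero.ne r)⟩, Finset.mem_univ _⟩
            (fun k : Fin r => l1Z (i - c1 k)) < l1Z (i + m - c2)) →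
        GammaBeta N a α β (i + m - c2) ≤
          ε * Finset.univ.sup' ⟨⟨0, Nat.pos_of_ne_zero (NeZero.ne r)⟩, Finset.mem_univ _⟩
            (fun k : Fin r => GammaBeta N a α βt (i - c1 k))) ∧
    (∀ ε : ℝ, 0 < ε → ∃ M : ℕ, ∀ m : Fin N → ℤ, M ≤ l1Z m →
      ∀ i : Fin N → ℤ,
        ¬ (Finset.univ.inf' ⟨⟨0, Nat.pos_of_ne_zero (NeZero.ne r)⟩, Finset.mem_univ _⟩
            (fun k : Fin r => l1Z (i - c1 k)) < l1Z (i + m - c2)) →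
        Finset.univ.sup' ⟨⟨0, Nat.pos_of_ne_zero (NeZero.ne r)⟩, Finset.mem_univ _⟩
            (fun k : Fin r => GammaBeta N a α β (i - c1 k)) ≤
          ε * GammaBeta N a α βt (i + m - c2)) :=
  statement15_general a α hα ha r c1 c2 β βt hβt hββ
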